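/- arXiv:2303.00564 — 3 statements merged into one kernel-verified Lean document; each statement's English description precedes it below -/
import Mathlib

section
/- (Structure in deeper layers is detrimental.) In the setting of the ridgeless learning curve, in the regime α₀ > 1 and α_min = min{α₁,…,α_L} > 1, the limiting generalization error satisfies ε ≥ (Σ_{ℓ=1}^{L} 1/(α_ℓ−1)) κ₀ ψ(κ₀) − (κ₀²/μ₀) ψ'(κ₀) + ((1−μ₀)/μ₀ + Σ_{ℓ=1}^{L} 1/(α_ℓ−1)) η². That is, the generalization error for arbitrary weight covariances Σ̃₁,…,Σ̃_L is bounded below by the generalization error obtained with unstructured weights Σ̃_ℓ = I_{n_ℓ} for ℓ = 1,…,L. -/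
/-!
With `f σ = σ / (κ + σ)`, which takes values in `(0, 1)`, the self-consistency condition reads
`E f = 1/α`. Jensen gives `E f² ≥ (E f)² = 1/α²`, and `f² < f` gives `E f² < E f`, so
`0 < μ ≤ 1 - 1/α`. Since `(1 - μ)/μ` decreases in `μ`, every layer `ℓ ≥ 1` contributes at least
`1/(α_ℓ - 1)`, its value for unstructured weights, and the coefficients of `κ₀ψ(κ₀)` and `η²`
in `ε` are nonnegative.
-/

open MeasureTheory ProbabilityTheory Set

section Integrals

variable {Ω : Type*} [MeasurableSpace Ω] {μ : Measure Ω} {f : Ω → ℝ}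

lemma integral_pos_of_ae_pos [NeZero μ] (hf : Integrable f μ) (h : ∀ᵐ x ∂μ, 0 < f x) :
    0 < ∫ x, f x ∂μ := by
  have hsupp : Function.support f =ᵐ[μ] univ :=
    (h.mono fun _ hx => iff_of_true hx.ne' (mem_univ _)).set_eq
  rw [integral_pos_iff_support_of_nonneg_ae (h.mono fun _ hx => hx.le) hf, measure_congr hsupp,
    Measure.measure_univ_pos]
  exact NeZero.ne μ

lemma integral_sq_lt_integral_of_ae_mem_Ioo [IsFiniteMeasure μ] [NeZero μ]
    (hf : AEMeasurable f μ) (h : ∀ᵐ x ∂μ, f x ∈ Ioo 0 1) :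
    ∫ x, f x ^ 2 ∂μ < ∫ x, f x ∂μ := by
  have hf₁ : Integrable f μ := .of_mem_Icc 0 1 hf (h.mono fun _ hx => Ioo_subset_Icc_self hx)
  have hf₂ : Integrable (fun x => f x ^ 2) μ :=
    .of_mem_Icc 0 1 (hf.pow_const 2) (h.mono fun _ ⟨h0, h1⟩ => ⟨by positivity, by nlinarith⟩)
  rw [← sub_pos, ← integral_sub hf₁ hf₂]
  exact integral_pos_of_ae_pos (hf₁.sub hf₂) (h.mono fun _ ⟨h0, h1⟩ => by nlinarith)

lemma sq_integral_le_integral_sq [IsProbabilityMeasure μ] (hf : MemLp f 2 μ) :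
    (∫ x, f x ∂μ) ^ 2 ≤ ∫ x, f x ^ 2 ∂μ := by
  have := variance_nonneg f μ
  rw [variance_eq_sub hf] at this
  simpa using this

lemma one_sub_mul_integral_sq_mem_Ioc [IsProbabilityMeasure μ] {a : ℝ} (hf : AEMeasurable f μ)
    (h : ∀ᵐ x ∂μ, f x ∈ Ioo 0 1) (hfa : ∫ x, f x ∂μ = 1 / a) :
    1 - a * ∫ x, f x ^ 2 ∂μ ∈ Ioc 0 (1 - 1 / a) := by
  have hlt := integral_sq_lt_integral_of_ae_mem_Ioo hf h
  have hle := sq_integral_le_integral_sq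
    (memLp_of_bounded (h.mono fun _ hx => Ioo_subset_Icc_self hx) hf.aestronglyMeasurable 2)
  have ha : 0 < a :=
    one_div_pos.1 <| hfa ▸ (integral_nonneg fun _ => sq_nonneg _).trans_lt hlt
  rw [hfa] at hlt hle
  constructor
  · have := mul_lt_mul_of_pos_left hlt ha
    rw [mul_one_div_cancel ha.ne'] at this
    linarith
  · have := mul_le_mul_of_nonneg_left hle ha.le
    rw [div_pow, one_pow, sq, ← div_div, mul_div_cancel₀ _ ha.ne'] at this
    linarith

end Integrals

lemma div_add_self_mem_Ioo {κ σ : ℝ} (hκ : 0 < κ) (hσ : 0 < σ) : σ / (κ + σ) ∈ Ioo 0 1 :=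
  ⟨by positivity, (div_lt_one (by positivity)).2 (by linarith)⟩

lemma one_div_sub_one_le_one_sub_div {a m : ℝ} (ha : 1 < a) (hm : 0 < m) (hma : m ≤ 1 - 1 / a) :
    1 / (a - 1) ≤ (1 - m) / m := by
  have hma' : m * a ≤ a - 1 := by
    have := mul_le_mul_of_nonneg_right hma (by linarith : (0 : ℝ) ≤ a)
    rwa [sub_mul, one_div_mul_cancel (by positivity), one_mul] at this
  rw [div_le_div_iff₀ (by linarith) hm]
  nlinarith

theorem weight_structure_detrimental_general
    (L : ℕ) (α : ℕ → ℝ)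
    -- overparameterized regime: α₀ > 1 and αmin > 1
    (hα : ∀ ℓ ≤ L, 1 < α ℓ)
    -- limiting spectral distributions of the covariances Σ̃₀, Σ̃₁, …, Σ̃_L
    (ν : ℕ → Measure ℝ) (hprob : ∀ ℓ ≤ L, IsProbabilityMeasure (ν ℓ))
    (hpos : ∀ ℓ ≤ L, ∀ᵐ σ ∂ν ℓ, 0 < σ)
    -- self-consistent quantities
    (κ μ : ℕ → ℝ)
    (hκ : ∀ ℓ ≤ L, 0 < κ ℓ ∧ ∫ σ, σ / (κ ℓ + σ) ∂ν ℓ = 1 / α ℓ)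
    (hμ : ∀ ℓ ≤ L, μ ℓ = 1 - α ℓ * ∫ σ, (σ / (κ ℓ + σ)) ^ 2 ∂ν ℓ)
    -- ψ(κ₀) ≥ 0
    (ψκ₀ dψ η : ℝ) (hψκ₀ : 0 ≤ ψκ₀)
    -- the generalization error in this regime
    (ε : ℝ)
    (hε : ε = (∑ ℓ ∈ Finset.Icc 1 L, (1 - μ ℓ) / μ ℓ) * (κ 0 * ψκ₀)
        - κ 0 ^ 2 / μ 0 * dψ
        + (∑ ℓ ∈ Finset.range (L + 1), (1 - μ ℓ) / μ ℓ) * η ^ 2) :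
    ε ≥ (∑ ℓ ∈ Finset.Icc 1 L, 1 / (α ℓ - 1)) * (κ 0 * ψκ₀)
        - κ 0 ^ 2 / μ 0 * dψ
        + ((1 - μ 0) / μ 0 + ∑ ℓ ∈ Finset.Icc 1 L, 1 / (α ℓ - 1)) * η ^ 2 := by
  have hlayer : ∀ ℓ ∈ Finset.Icc 1 L, 1 / (α ℓ - 1) ≤ (1 - μ ℓ) / μ ℓ := by
    intro ℓ hℓ
    have hℓL := (Finset.mem_Icc.1 hℓ).2
    have := hprob ℓ hℓL
    obtain ⟨hκℓ, hfix⟩ := hκ ℓ hℓL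
    obtain ⟨hμpos, hμle⟩ := hμ ℓ hℓL ▸ one_sub_mul_integral_sq_mem_Ioc (by fun_prop)
      ((hpos ℓ hℓL).mono fun _ hσ => div_add_self_mem_Ioo hκℓ hσ) hfix
    exact one_div_sub_one_le_one_sub_div (hα ℓ hℓL) hμpos hμle
  have hsum := Finset.sum_le_sum hlayer
  have hsplit : ∑ ℓ ∈ Finset.range (L + 1), (1 - μ ℓ) / μ ℓ
      = (1 - μ 0) / μ 0 + ∑ ℓ ∈ Finset.Icc 1 L, (1 - μ ℓ) / μ ℓ := by
    rw [Finset.range_eq_Ico, Finset.sum_eq_sum_Ico_succ_bot (by omega), zero_add,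
      Finset.Ico_add_one_right_eq_Icc]
  have hκψ : 0 ≤ κ 0 * ψκ₀ := mul_nonneg (hκ 0 L.zero_le).1.le hψκ₀
  rw [hε, hsplit]
  nlinarith [mul_le_mul_of_nonneg_right hsum hκψ, mul_le_mul_of_nonneg_right hsum (sq_nonneg η)]

/-- Lemma 2, structure in deeper layers is detrimental.  In the regime
`α₀ > 1`, `αmin = min{α₁,…,α_L} > 1` of the ridgeless learning curve, the limiting
generalization error
`ε = (Σ_{ℓ=1}^L (1−μ_ℓ)/μ_ℓ) κ₀ψ(κ₀) − (κ₀²/μ₀)ψ'(κ₀) + (Σ_{ℓ=0}^L (1−μ_ℓ)/μ_ℓ) η²`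
is bounded below by the generalization error obtained with unstructured weights
`Σ̃_ℓ = I` for `ℓ = 1,…,L`, namely
`(Σ_{ℓ=1}^L 1/(α_ℓ−1)) κ₀ψ(κ₀) − (κ₀²/μ₀)ψ'(κ₀) + ((1−μ₀)/μ₀ + Σ_{ℓ=1}^L 1/(α_ℓ−1)) η²`.
Here `ν_ℓ` is the limiting spectral distribution of `Σ̃_ℓ`, `κ_ℓ > 0` solves
`E[σ̃_ℓ/(κ_ℓ+σ̃_ℓ)] = 1/α_ℓ`, `μ_ℓ = 1 − α_ℓ E[(σ̃_ℓ/(κ_ℓ+σ̃_ℓ))²]`, `ψ(κ₀) ≥ 0` and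
`−ψ'(κ₀) ≥ 0`. -/
theorem weight_structure_detrimental
    (L : ℕ) (hL : 1 ≤ L) (α : ℕ → ℝ)
    -- overparameterized regime: α₀ > 1 and αmin > 1
    (hα : ∀ ℓ ≤ L, 1 < α ℓ)
    -- limiting spectral distributions of the covariances Σ̃₀, Σ̃₁, …, Σ̃_L
    (ν : ℕ → Measure ℝ) (hprob : ∀ ℓ ≤ L, IsProbabilityMeasure (ν ℓ))
    (hpos : ∀ ℓ ≤ L, ∀ᵐ σ ∂ν ℓ, 0 < σ)
    -- self-consistent quantities
    (κ μ : ℕ → ℝ)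
    (hκ : ∀ ℓ ≤ L, 0 < κ ℓ ∧ ∫ σ, σ / (κ ℓ + σ) ∂ν ℓ = 1 / α ℓ)
    (hμ : ∀ ℓ ≤ L, μ ℓ = 1 - α ℓ * ∫ σ, (σ / (κ ℓ + σ)) ^ 2 ∂ν ℓ)
    -- ψ(κ₀) ≥ 0 and ψ'(κ₀) ≤ 0, and the noise level η ≥ 0
    (ψκ₀ dψ η : ℝ) (hψκ₀ : 0 ≤ ψκ₀) (hdψ : dψ ≤ 0) (hη : 0 ≤ η)
    -- the generalization error in this regime
    (ε : ℝ)
    (hε : ε = (∑ ℓ ∈ Finset.Icc 1 L, (1 - μ ℓ) / μ ℓ) * (κ 0 * ψκ₀)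
        - κ 0 ^ 2 / μ 0 * dψ
        + (∑ ℓ ∈ Finset.range (L + 1), (1 - μ ℓ) / μ ℓ) * η ^ 2) :
    ε ≥ (∑ ℓ ∈ Finset.Icc 1 L, 1 / (α ℓ - 1)) * (κ 0 * ψκ₀)
        - κ 0 ^ 2 / μ 0 * dψ
        + ((1 - μ 0) / μ 0 + ∑ ℓ ∈ Finset.Icc 1 L, 1 / (α ℓ - 1)) * η ^ 2 :=
  weight_structure_detrimental_general L α hα ν hprob hpos κ μ hκ hμ ψκ₀ dψ η hψκ₀ ε hε
end

section
/- (Anisotropic data can help, target-averaged, noiseless.) In the setting of the target-averaged ridgeless learning curve with no label noise (η = 0), suppose the limiting spectral distribution of Σ̃₀ has finite mean E[σ̃₀]. Then: ε̄ ≤ (1 + Σ_{ℓ=1}^{L} (1−μ_ℓ)/μ_ℓ)(1 − 1/α₀) E[σ̃₀] if α₀ > 1 and α_min > 1; ε̄ ≤ ((1 − α_min/α₀)/(1−α_min)) E[σ̃₀] if α_min < 1 and α_min < α₀; and ε̄ = 0 if α₀ < 1 and α₀ < α_min. That is, ε̄ for a given Σ̃₀ is bounded above by the generalization error for the flat spectrum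 Σ̃₀ = E[σ̃₀] I. -/
/-!
The mean-field error in each regime is controlled by the resolvent average
`c(κ) = E[σ/(κ+σ)]` of the data spectrum. Since `σ ↦ σ/(κ+σ)` is concave, lying below its tangent
at the mean `m = E[σ]`, Jensen gives `c(κ) ≤ m/(κ+m)`, i.e. `κ c(κ) ≤ (1 - c(κ)) m`, with equality for
the flat spectrum. Plugging in `c(κ₀) = 1/α₀` resp. `c(κmin) = αmin/α₀` bounds `κ₀/α₀` and
`κmin αmin/α₀` by their flat-spectrum values; in the first regime it remains to note
`0 ≤ μ_ℓ ≤ 1`, which follows from `(σ/(κ+σ))² ≤ σ/(κ+σ)`.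
-/

open MeasureTheory

lemma div_add_self_mem_Icc {κ σ : ℝ} (hκ : 0 ≤ κ) (hσ : 0 < σ) : σ / (κ + σ) ∈ Set.Icc 0 1 :=
  ⟨by positivity, (div_le_one (by positivity)).2 (by linarith)⟩

lemma div_add_self_le_tangent {κ m σ : ℝ} (hκ : 0 ≤ κ) (hm : 0 < m) (hσ : 0 < σ) :
    σ / (κ + σ) ≤ m / (κ + m) + κ / (κ + m) ^ 2 * (σ - m) := by
  have hκσ : 0 < κ + σ := by positivity
  have hκm : 0 < κ + m := by positivity
  have hgap : (m / (κ + m) + κ / (κ + m) ^ 2 * (σ - m)) * (κ + σ) - σ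
      = κ * (σ - m) ^ 2 / (κ + m) ^ 2 := by
    field_simp
    ring
  rw [div_le_iff₀ hκσ, ← sub_nonneg, hgap]
  positivity

section Spectrum

variable {ν : Measure ℝ} [IsProbabilityMeasure ν]

lemma integral_id_pos (hpos : ∀ᵐ σ ∂ν, 0 < σ) (hmom : Integrable (fun σ : ℝ => σ) ν) :
    0 < ∫ σ, σ ∂ν := by
  have hnonneg : ∀ᵐ σ ∂ν, 0 ≤ σ := hpos.mono fun _ h => h.le
  refine (integral_nonneg_of_ae hnonneg).lt_of_ne' fun hzero => ?_
  obtain ⟨σ, hσ, hσ0⟩ :=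
    (hpos.and ((integral_eq_zero_iff_of_nonneg_ae hnonneg hmom).1 hzero)).exists
  exact hσ.ne' hσ0

lemma integrable_div_add_self {κ : ℝ} (hκ : 0 ≤ κ) (hpos : ∀ᵐ σ ∂ν, 0 < σ) :
    Integrable (fun σ : ℝ => σ / (κ + σ)) ν :=
  Integrable.of_bound
    (measurable_id.div (measurable_const.add measurable_id)).aestronglyMeasurable 1 <| hpos.mono fun σ hσ => by
    obtain ⟨h0, h1⟩ := div_add_self_mem_Icc hκ hσ
    rwa [Real.norm_of_nonneg h0]

lemma integral_sq_div_add_self_le {κ : ℝ} (hκ : 0 ≤ κ) (hpos : ∀ᵐ σ ∂ν, 0 < σ) :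
    ∫ σ, (σ / (κ + σ)) ^ 2 ∂ν ≤ ∫ σ, σ / (κ + σ) ∂ν := by
  have hint := integrable_div_add_self hκ hpos
  refine integral_mono_ae (hint.mono' (hint.aestronglyMeasurable.pow 2) ?_) hint ?_ <;>
    filter_upwards [hpos] with σ hσ <;>
    obtain ⟨h0, h1⟩ := div_add_self_mem_Icc hκ hσ
  · rw [norm_pow, Real.norm_of_nonneg h0]
    nlinarith
  · nlinarith

lemma integral_div_add_self_le (hpos : ∀ᵐ σ ∂ν, 0 < σ) (hmom : Integrable (fun σ : ℝ => σ) ν)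
    {κ : ℝ} (hκ : 0 ≤ κ) :
    ∫ σ, σ / (κ + σ) ∂ν ≤ (∫ σ, σ ∂ν) / (κ + ∫ σ, σ ∂ν) := by
  set m := ∫ σ, σ ∂ν
  have hm : 0 < m := integral_id_pos hpos hmom
  have hslope : Integrable (fun σ : ℝ => κ / (κ + m) ^ 2 * (σ - m)) ν :=
    (hmom.sub (integrable_const m)).const_mul _
  calc ∫ σ, σ / (κ + σ) ∂ν
      ≤ ∫ σ, (m / (κ + m) + κ / (κ + m) ^ 2 * (σ - m)) ∂ν :=
        integral_mono_ae (integrable_div_add_self hκ hpos) ((integrable_const _).add hslope)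
          (hpos.mono fun _ hσ => div_add_self_le_tangent hκ hm hσ)
    _ = m / (κ + m) := by
        rw [integral_add (integrable_const _) hslope, integral_const_mul,
          integral_sub hmom (integrable_const m)]
        simp [m]

lemma mul_integral_div_add_self_le (hpos : ∀ᵐ σ ∂ν, 0 < σ)
    (hmom : Integrable (fun σ : ℝ => σ) ν) {κ : ℝ} (hκ : 0 ≤ κ) :
    κ * ∫ σ, σ / (κ + σ) ∂ν ≤ (1 - ∫ σ, σ / (κ + σ) ∂ν) * ∫ σ, σ ∂ν := by
  have hm := integral_id_pos hpos hmom
  have hjensen := integral_div_add_self_le hpos hmom hκ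
  rw [le_div_iff₀ (by positivity)] at hjensen
  linarith

lemma one_sub_div_nonneg_of_integral_div_add_self_eq_inv {κ a : ℝ} (hκ : 0 ≤ κ) (ha : 0 < a)
    (hpos : ∀ᵐ σ ∂ν, 0 < σ) (hcrit : ∫ σ, σ / (κ + σ) ∂ν = 1 / a) :
    0 ≤ (1 - (1 - a * ∫ σ, (σ / (κ + σ)) ^ 2 ∂ν)) / (1 - a * ∫ σ, (σ / (κ + σ)) ^ 2 ∂ν) := by
  have hsq_nonneg : 0 ≤ ∫ σ, (σ / (κ + σ)) ^ 2 ∂ν := integral_nonneg fun _ => sq_nonneg _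
  have hsq_le : a * ∫ σ, (σ / (κ + σ)) ^ 2 ∂ν ≤ 1 := by
    calc a * ∫ σ, (σ / (κ + σ)) ^ 2 ∂ν ≤ a * (1 / a) := by
          rw [← hcrit]; exact mul_le_mul_of_nonneg_left (integral_sq_div_add_self_le hκ hpos) ha.le
      _ = 1 := mul_one_div_cancel ha.ne'
  apply div_nonneg <;> nlinarith

end Spectrum

theorem anisotropic_data_beneficial_target_averaged_general
    (L : ℕ) (α : ℕ → ℝ) (αmin : ℝ)
    -- αmin = min{α₁, …, α_L}
    (hαmin : IsLeast {x | ∃ ℓ, 1 ≤ ℓ ∧ ℓ ≤ L ∧ x = α ℓ} αmin)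
    -- limiting spectral distributions of the covariances Σ̃₀, Σ̃₁, …, Σ̃_L
    (ν : ℕ → Measure ℝ) (hprob : ∀ ℓ ≤ L, IsProbabilityMeasure (ν ℓ))
    (hpos : ∀ ℓ ≤ L, ∀ᵐ σ ∂ν ℓ, 0 < σ)
    -- the data spectrum has finite mean
    (hmom : Integrable (fun σ : ℝ => σ) (ν 0))
    -- self-consistent quantities (in the regimes where they are defined)
    (κ μ : ℕ → ℝ) (κmin : ℝ)
    (hκ : ∀ ℓ ≤ L, 1 < α ℓ → 0 < κ ℓ ∧ ∫ σ, σ / (κ ℓ + σ) ∂ν ℓ = 1 / α ℓ)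
    (hμ : ∀ ℓ ≤ L, 1 < α ℓ → μ ℓ = 1 - α ℓ * ∫ σ, (σ / (κ ℓ + σ)) ^ 2 ∂ν ℓ)
    (hκmin : αmin < α 0 → 0 ≤ κmin ∧ ∫ σ, σ / (κmin + σ) ∂ν 0 = αmin / α 0)
    -- the target-averaged ridgeless generalization error with η = 0, regime by regime
    (εbar : ℝ)
    (hεbar1 : 1 < α 0 → 1 < αmin →
      εbar = (1 + ∑ ℓ ∈ Finset.Icc 1 L, (1 - μ ℓ) / μ ℓ) * (κ 0 / α 0))
    (hεbar2 : αmin < 1 → αmin < α 0 →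
      εbar = αmin * κmin / α 0 / (1 - αmin))
    (hεbar3 : α 0 < 1 → α 0 < αmin → εbar = 0) :
    (1 < α 0 → 1 < αmin →
      εbar ≤ (1 + ∑ ℓ ∈ Finset.Icc 1 L, (1 - μ ℓ) / μ ℓ) * (1 - 1 / α 0) *
        ∫ σ, σ ∂ν 0) ∧
    (αmin < 1 → αmin < α 0 →
      εbar ≤ (1 - αmin / α 0) / (1 - αmin) * ∫ σ, σ ∂ν 0) ∧
    (α 0 < 1 → α 0 < αmin → εbar = 0) := by
  have := hprob 0 L.zero_le
  refine ⟨fun hα₀ hαmin₁ => ?_, fun hαmin₁ hαmin₀ => ?_, hεbar3⟩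
  · obtain ⟨hκ₀, hcrit₀⟩ := hκ 0 L.zero_le hα₀
    have hbound := mul_integral_div_add_self_le (hpos 0 L.zero_le) hmom hκ₀.le
    rw [hcrit₀] at hbound
    have hS : 0 ≤ ∑ ℓ ∈ Finset.Icc 1 L, (1 - μ ℓ) / μ ℓ := by
      refine Finset.sum_nonneg fun ℓ hℓ => ?_
      obtain ⟨hℓ₁, hℓL⟩ := Finset.mem_Icc.1 hℓ
      have hαℓ : 1 < α ℓ := hαmin₁.trans_le (hαmin.2 ⟨ℓ, hℓ₁, hℓL, rfl⟩)
      obtain ⟨hκℓ, hcritℓ⟩ := hκ ℓ hℓL hαℓ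
      have := hprob ℓ hℓL
      rw [hμ ℓ hℓL hαℓ]
      exact one_sub_div_nonneg_of_integral_div_add_self_eq_inv hκℓ.le (by linarith)
        (hpos ℓ hℓL) hcritℓ
    rw [hεbar1 hα₀ hαmin₁, mul_assoc, div_eq_mul_one_div (κ 0)]
    exact mul_le_mul_of_nonneg_left hbound (by linarith)
  · obtain ⟨hκmin₀, hcritmin⟩ := hκmin hαmin₀
    have hbound := mul_integral_div_add_self_le (hpos 0 L.zero_le) hmom hκmin₀
    rw [hcritmin] at hbound
    rw [hεbar2 hαmin₁ hαmin₀, div_mul_eq_mul_div,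
      show αmin * κmin / α 0 = κmin * (αmin / α 0) by ring]
    exact div_le_div_of_nonneg_right hbound (by linarith)

/-- Lemma 3, anisotropic data can help on average, noiseless case.  In the
setting of the target-averaged ridgeless learning curve with no label noise (`η = 0`), if the
limiting spectral distribution `ν₀` of the data covariance `Σ̃₀` has finite mean `E[σ̃₀]`,
then the target-averaged error `ε̄` is bounded above by the generalization error obtained for
the flat spectrum `Σ̃₀ = E[σ̃₀] I`:
`ε̄ ≤ (1 + Σ_{ℓ=1}^L (1−μ_ℓ)/μ_ℓ)(1 − 1/α₀) E[σ̃₀]` if `α₀ > 1 ∧ αmin > 1`;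
`ε̄ ≤ ((1 − αmin/α₀)/(1−αmin)) E[σ̃₀]` if `αmin < 1 ∧ αmin < α₀`; and `ε̄ = 0` if
`α₀ < 1 ∧ α₀ < αmin`. -/
theorem anisotropic_data_beneficial_target_averaged
    (L : ℕ) (hL : 1 ≤ L) (α : ℕ → ℝ) (αmin : ℝ)
    (hαpos : ∀ ℓ ≤ L, 0 < α ℓ)
    -- αmin = min{α₁, …, α_L}
    (hαmin : IsLeast {x | ∃ ℓ, 1 ≤ ℓ ∧ ℓ ≤ L ∧ x = α ℓ} αmin)
    -- limiting spectral distributions of the covariances Σ̃₀, Σ̃₁, …, Σ̃_L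
    (ν : ℕ → Measure ℝ) (hprob : ∀ ℓ ≤ L, IsProbabilityMeasure (ν ℓ))
    (hpos : ∀ ℓ ≤ L, ∀ᵐ σ ∂ν ℓ, 0 < σ)
    -- the data spectrum has finite mean
    (hmom : Integrable (fun σ : ℝ => σ) (ν 0))
    -- self-consistent quantities (in the regimes where they are defined)
    (κ μ : ℕ → ℝ) (κmin : ℝ)
    (hκ : ∀ ℓ ≤ L, 1 < α ℓ → 0 < κ ℓ ∧ ∫ σ, σ / (κ ℓ + σ) ∂ν ℓ = 1 / α ℓ)
    (hμ : ∀ ℓ ≤ L, 1 < α ℓ → μ ℓ = 1 - α ℓ * ∫ σ, (σ / (κ ℓ + σ)) ^ 2 ∂ν ℓ)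
    (hκmin : αmin < α 0 → 0 ≤ κmin ∧ ∫ σ, σ / (κmin + σ) ∂ν 0 = αmin / α 0)
    -- the target-averaged ridgeless generalization error with η = 0, regime by regime
    (εbar : ℝ)
    (hεbar1 : 1 < α 0 → 1 < αmin →
      εbar = (1 + ∑ ℓ ∈ Finset.Icc 1 L, (1 - μ ℓ) / μ ℓ) * (κ 0 / α 0))
    (hεbar2 : αmin < 1 → αmin < α 0 →
      εbar = αmin * κmin / α 0 / (1 - αmin))
    (hεbar3 : α 0 < 1 → α 0 < αmin → εbar = 0) :
    (1 < α 0 → 1 < αmin →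
      εbar ≤ (1 + ∑ ℓ ∈ Finset.Icc 1 L, (1 - μ ℓ) / μ ℓ) * (1 - 1 / α 0) *
        ∫ σ, σ ∂ν 0) ∧
    (αmin < 1 → αmin < α 0 →
      εbar ≤ (1 - αmin / α 0) / (1 - αmin) * ∫ σ, σ ∂ν 0) ∧
    (α 0 < 1 → α 0 < αmin → εbar = 0) :=
  anisotropic_data_beneficial_target_averaged_general L α αmin hαmin ν hprob hpos hmom κ μ κmin hκ
    hμ hκmin εbar hεbar1 hεbar2 hεbar3
end

section
/- (Large prior variance limit of the Gibbs estimator.) In the setting of the Gibbs estimator learning curve, in the regime α₀ > 1 and α_min = min{α₁,…,α_L} > 1, consider the Gibbs estimator with weight covariances scaled as τ_ℓ Σ̃_ℓ for ℓ = 1,…,L with τ_ℓ > 0. Then lim_{τ₁,…,τ_L → ∞} ε_BRF / ∏_{ℓ=1}^{L} τ_ℓ = ∏_{ℓ=0}^{L} (κ_ℓ/α_ℓ), and if each limiting spectral distribution of Σ̃_ℓ has finite mean E_{σ̃_ℓ}[σ̃_ℓ], this limit is bounded above by (κ₀/α₀) ς² ∏_{ℓ=1}^{L} (1 − 1/α_ℓ),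 where ς² = ∏_{ℓ=1}^{L} E_{σ̃_ℓ}[σ̃_ℓ] and the κ_ℓ are defined with respect to the un-scaled covariances Σ̃_ℓ. -/
/-!
After the scaling, `ε_BRF(τ) = ε_ridgeless + (∏ τ_ℓ) ∏_{ℓ=0}^L κ_ℓ/α_ℓ`, and `∏ τ_ℓ → ∞`, so the
ratio tends to `∏ κ_ℓ/α_ℓ`. For the bound, `σ ↦ σ/(κ+σ)` is concave, so Jensen's inequality in the
fixed-point equation gives `1/α ≤ m/(κ+m)` with `m = E[σ]`, i.e. `κ/α ≤ m (1 - 1/α)`; multiply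
over the layers.
-/

open MeasureTheory Filter Topology

theorem tendsto_prod_pi_atTop {ι : Type*} [Fintype ι] [Nonempty ι] :
    Tendsto (fun τ : ι → ℝ => ∏ i, τ i) atTop atTop := by
  refine tendsto_atTop.2 fun b => ?_
  filter_upwards [eventually_ge_atTop (fun _ : ι => max b 1)] with τ hτ
  calc b ≤ max b 1 := le_max_left _ _
    _ ≤ max b 1 ^ Fintype.card ι := le_self_pow₀ (le_max_right _ _) Fintype.card_ne_zero
    _ = ∏ _i : ι, max b 1 := by rw [Finset.prod_const, Finset.card_univ]
    _ ≤ ∏ i, τ i := Finset.prod_le_prod (fun _ _ => zero_le_one.trans (le_max_right _ _))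
        fun i _ => hτ i

theorem Filter.Tendsto.add_mul_div_self {α : Type*} {l : Filter α} {g : α → ℝ}
    (hg : Tendsto g l atTop) (a b : ℝ) :
    Tendsto (fun x => (a + g x * b) / g x) l (𝓝 b) := by
  have hlim : Tendsto (fun x => a / g x + b) l (𝓝 (0 + b)) :=
    (tendsto_const_nhds.div_atTop hg).add tendsto_const_nhds
  rw [zero_add] at hlim
  refine hlim.congr' ?_
  filter_upwards [hg.eventually_gt_atTop 0] with x hx
  field_simp

theorem div_add_le_tangent {κ σ m : ℝ} (hκ : 0 ≤ κ) (hσ : 0 < κ + σ) (hm : 0 < κ + m) :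
    σ / (κ + σ) ≤ m / (κ + m) + κ / (κ + m) ^ 2 * (σ - m) := by
  have hgap : m / (κ + m) + κ / (κ + m) ^ 2 * (σ - m) - σ / (κ + σ)
      = κ * (σ - m) ^ 2 / ((κ + σ) * (κ + m) ^ 2) := by
    field_simp
    ring
  have : 0 ≤ κ * (σ - m) ^ 2 / ((κ + σ) * (κ + m) ^ 2) := by positivity
  linarith

section Jensen

variable {ν : Measure ℝ} [IsProbabilityMeasure ν] {κ : ℝ}

theorem integral_div_add_le_div_add_integral (hκ : 0 < κ) (hnonneg : ∀ᵐ σ ∂ν, 0 ≤ σ)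
    (hint : Integrable (fun σ : ℝ => σ) ν) :
    ∫ σ, σ / (κ + σ) ∂ν ≤ (∫ σ, σ ∂ν) / (κ + ∫ σ, σ ∂ν) := by
  set m := ∫ σ, σ ∂ν
  have hm : 0 < κ + m := by
    have : 0 ≤ m := integral_nonneg_of_ae hnonneg
    linarith
  have hbounded : Integrable (fun σ : ℝ => σ / (κ + σ)) ν := by
    refine (integrable_const (1 : ℝ)).mono'
      (by fun_prop : Measurable fun σ : ℝ => σ / (κ + σ)).aestronglyMeasurable ?_
    filter_upwards [hnonneg] with σ hσ
    rw [Real.norm_eq_abs, abs_of_nonneg (by positivity), div_le_one (by linarith)]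
    linarith
  have htangent : Integrable (fun σ => m / (κ + m) + κ / (κ + m) ^ 2 * (σ - m)) ν :=
    (integrable_const _).add ((hint.sub (integrable_const m)).const_mul _)
  calc ∫ σ, σ / (κ + σ) ∂ν
      ≤ ∫ σ, m / (κ + m) + κ / (κ + m) ^ 2 * (σ - m) ∂ν := by
        refine integral_mono_ae hbounded htangent ?_
        filter_upwards [hnonneg] with σ hσ
        exact div_add_le_tangent hκ.le (by linarith) hm
    _ = m / (κ + m) := by
        have hcentered : Integrable (fun σ : ℝ => σ - m) ν := hint.sub (integrable_const m)
        rw [integral_add (integrable_const _) (hcentered.const_mul _), integral_const_mul,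
          integral_sub hint (integrable_const m)]
        simp [m]

theorem div_le_integral_mul_one_sub_inv {α : ℝ} (hκ : 0 < κ) (hα : 0 < α)
    (hnonneg : ∀ᵐ σ ∂ν, 0 ≤ σ) (hint : Integrable (fun σ : ℝ => σ) ν)
    (hfix : ∫ σ, σ / (κ + σ) ∂ν = 1 / α) :
    κ / α ≤ (∫ σ, σ ∂ν) * (1 - 1 / α) := by
  have hjensen := hfix ▸ integral_div_add_le_div_add_integral hκ hnonneg hint
  set m := ∫ σ, σ ∂ν
  have hm : 0 < κ + m := by
    have : 0 ≤ m := integral_nonneg_of_ae hnonneg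
    linarith
  rw [div_le_div_iff₀ hα hm] at hjensen
  rw [show m * (1 - 1 / α) = (m * α - m) / α by field_simp]
  exact div_le_div_of_nonneg_right (by linarith) hα.le

end Jensen

/-- Lemma 4, large-prior-variance limit of the Gibbs estimator.  In the
regime `α₀ > 1`, `min{α₁,…,α_L} > 1` of the Gibbs estimator learning curve, with weight
covariances scaled as `τ_ℓ Σ̃_ℓ` for `ℓ = 1,…,L` (so that `κ_ℓ ↦ τ_ℓ κ_ℓ` while
`ε_ridgeless` is unchanged), one has
`lim_{τ₁,…,τ_L → ∞} ε_BRF(τ) / ∏ τ_ℓ = ∏_{ℓ=0}^L κ_ℓ/α_ℓ`, and if the limiting spectral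
distributions have finite means then this limit is bounded above by
`(κ₀/α₀) ς² ∏_{ℓ=1}^L (1 − 1/α_ℓ)` with `ς² = ∏_{ℓ=1}^L E[σ̃_ℓ]`, the `κ_ℓ` being defined
through the unscaled covariances.  (The coordinate `i : Fin L` stands for layer `ℓ = i+1`.) -/
theorem gibbs_large_prior_variance
    (L : ℕ) (hL : 1 ≤ L) (α : ℕ → ℝ)
    -- overparameterized regime: α₀ > 1 and all hidden-layer ratios exceed one
    (hα : ∀ ℓ ≤ L, 1 < α ℓ)
    -- limiting spectral distributions of the unscaled covariances Σ̃₀, Σ̃₁, …, Σ̃_L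
    (ν : ℕ → Measure ℝ) (hprob : ∀ ℓ ≤ L, IsProbabilityMeasure (ν ℓ))
    (hpos : ∀ ℓ ≤ L, ∀ᵐ σ ∂ν ℓ, 0 < σ)
    -- κ_ℓ > 0 is the solution of E[σ̃_ℓ/(κ_ℓ+σ̃_ℓ)] = 1/α_ℓ for the unscaled covariances
    (κ : ℕ → ℝ)
    (hκ : ∀ ℓ ≤ L, 0 < κ ℓ ∧ ∫ σ, σ / (κ ℓ + σ) ∂ν ℓ = 1 / α ℓ)
    -- the Gibbs learning curve for the scaled covariances τ_ℓ Σ̃_ℓ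
    (εridge : ℝ) (εBRF : (Fin L → ℝ) → ℝ)
    (hBRF : ∀ τ : Fin L → ℝ, (∀ i, 0 < τ i) →
      εBRF τ = εridge +
        (κ 0 / α 0) * ∏ i : Fin L, (τ i * κ (i.val + 1) / α (i.val + 1))) :
    Tendsto (fun τ : Fin L → ℝ => εBRF τ / ∏ i : Fin L, τ i) atTop
      (nhds ((κ 0 / α 0) * ∏ i : Fin L, κ (i.val + 1) / α (i.val + 1))) ∧
    ((∀ ℓ, 1 ≤ ℓ → ℓ ≤ L → Integrable (fun σ : ℝ => σ) (ν ℓ)) →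
      (κ 0 / α 0) * ∏ i : Fin L, κ (i.val + 1) / α (i.val + 1) ≤
        (κ 0 / α 0) * (∏ i : Fin L, ∫ σ, σ ∂ν (i.val + 1)) *
          ∏ i : Fin L, (1 - 1 / α (i.val + 1))) := by
  have hratio_nonneg : ∀ ℓ ≤ L, 0 ≤ κ ℓ / α ℓ := fun ℓ hℓ =>
    div_nonneg (hκ ℓ hℓ).1.le (zero_le_one.trans (hα ℓ hℓ).le)
  constructor
  · have : Nonempty (Fin L) := ⟨⟨0, hL⟩⟩
    have hlinear : ∀ᶠ τ : Fin L → ℝ in atTop, εBRF τ = εridge +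
        (∏ i, τ i) * ((κ 0 / α 0) * ∏ i : Fin L, κ (i.val + 1) / α (i.val + 1)) := by
      filter_upwards [eventually_ge_atTop 1] with τ hτ
      rw [hBRF τ fun i => one_pos.trans_le (hτ i)]
      simp_rw [mul_div_assoc, Finset.prod_mul_distrib]
      ring
    exact (tendsto_prod_pi_atTop.add_mul_div_self εridge _).congr'
      (hlinear.mono fun τ h => by simp only [h])
  · intro hint
    have hlayer : ∀ i : Fin L, κ (i.val + 1) / α (i.val + 1)
        ≤ (∫ σ, σ ∂ν (i.val + 1)) * (1 - 1 / α (i.val + 1)) := fun i => by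
      have hi : i.val + 1 ≤ L := i.isLt
      have := hprob _ hi
      exact div_le_integral_mul_one_sub_inv (hκ _ hi).1 (one_pos.trans (hα _ hi))
        ((hpos _ hi).mono fun _ h => h.le) (hint _ (Nat.le_add_left 1 _) hi) (hκ _ hi).2
    calc (κ 0 / α 0) * ∏ i : Fin L, κ (i.val + 1) / α (i.val + 1)
        ≤ (κ 0 / α 0) * ∏ i : Fin L, (∫ σ, σ ∂ν (i.val + 1)) * (1 - 1 / α (i.val + 1)) :=
          mul_le_mul_of_nonneg_left
            (Finset.prod_le_prod (fun i _ => hratio_nonneg _ i.isLt) fun i _ => hlayer i)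
            (hratio_nonneg 0 L.zero_le)
      _ = _ := by rw [Finset.prod_mul_distrib, mul_assoc]
end
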